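/- Assume char k ≠ 2. Let σ, τ ∈ Gal(K/k) with σ ≠ τ. Let N be the subgroup {(a σ(b), a τ(b)) : a, b ∈ K^×} of K^× × K^×, let A := (K^× × K^×)/N, and let S := {(δ, ε) ∈ Gal(K/k)² : {δ⁻¹σε, δ⁻¹τε} = {σ, τ}}, a subgroup of Gal(K/k)². Then the assignment θ sending (δ, ε) ∈ S to the map A → A given on classes by [(c, d)] ↦ [(δ⁻¹(c), δ⁻¹(d))] if δ⁻¹σε = σ, and by [(c, d)] ↦ [(δ⁻¹(d), δ⁻¹(c))] if δ⁻¹σε = τ, is well defined (each θ(δ, ε) is a group automorphism of A), and θ is a group homomorphism from the opposite group S^op to Aut(A). -/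

import Mathlib

noncomputable section

variable (k K : Type*) [Field k] [Field K] [Algebra k K]

/-- The subgroup `N = {(a σ(b), a τ(b)) : a, b ∈ Kˣ}` of `Kˣ × Kˣ`. -/
def NN (σ τ : K ≃ₐ[k] K) : Subgroup (Kˣ × Kˣ) where
  carrier := {p | ∃ a b : Kˣ, ((p.1 : K) = (a : K) * σ (b : K)) ∧ ((p.2 : K) = (a : K) * τ (b : K))}
  one_mem' := ⟨1, 1, by simp⟩
  mul_mem' := by
    rintro p q ⟨a, b, h1, h2⟩ ⟨c, d, h3, h4⟩
    refine ⟨a * c, b * d, ?_, ?_⟩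
    · rw [Prod.fst_mul, Units.val_mul, h1, h3, Units.val_mul, Units.val_mul, map_mul]; ring
    · rw [Prod.snd_mul, Units.val_mul, h2, h4, Units.val_mul, Units.val_mul, map_mul]; ring
  inv_mem' := by
    rintro p ⟨a, b, h1, h2⟩
    refine ⟨a⁻¹, b⁻¹, ?_, ?_⟩
    · rw [Prod.fst_inv, Units.val_inv_eq_inv_val, h1, Units.val_inv_eq_inv_val,
        Units.val_inv_eq_inv_val, map_inv₀, mul_inv]
    · rw [Prod.snd_inv, Units.val_inv_eq_inv_val, h2, Units.val_inv_eq_inv_val,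
        Units.val_inv_eq_inv_val, map_inv₀, mul_inv]

instance (σ τ : K ≃ₐ[k] K) : (NN k K σ τ).Normal := Subgroup.normal_of_comm _

/-- The subgroup `S = {(δ, ε) : {δ⁻¹σε, δ⁻¹τε} = {σ, τ}}` of `Gal(K/k)²` (for `σ ≠ τ` the
displayed set equality is equivalent to the disjunction used here). -/
def Sgrp (σ τ : K ≃ₐ[k] K) : Subgroup ((K ≃ₐ[k] K) × (K ≃ₐ[k] K)) where
  carrier := {p | (p.1⁻¹ * σ * p.2 = σ ∧ p.1⁻¹ * τ * p.2 = τ) ∨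
    (p.1⁻¹ * σ * p.2 = τ ∧ p.1⁻¹ * τ * p.2 = σ)}
  one_mem' := Or.inl ⟨by simp, by simp⟩
  mul_mem' := by
    rintro p q (⟨h1, h2⟩ | ⟨h1, h2⟩) (⟨h3, h4⟩ | ⟨h3, h4⟩)
    all_goals
      have e1 : (p * q).1⁻¹ * σ * (p * q).2 = q.1⁻¹ * (p.1⁻¹ * σ * p.2) * q.2 := by
        show (p.1 * q.1)⁻¹ * σ * (p.2 * q.2) = _
        group
      have e2 : (p * q).1⁻¹ * τ * (p * q).2 = q.1⁻¹ * (p.1⁻¹ * τ * p.2) * q.2 := by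
        show (p.1 * q.1)⁻¹ * τ * (p.2 * q.2) = _
        group
    · exact Or.inl ⟨by rw [e1, h1, h3], by rw [e2, h2, h4]⟩
    · exact Or.inr ⟨by rw [e1, h1, h3], by rw [e2, h2, h4]⟩
    · exact Or.inr ⟨by rw [e1, h1, h4], by rw [e2, h2, h3]⟩
    · exact Or.inl ⟨by rw [e1, h1, h4], by rw [e2, h2, h3]⟩
  inv_mem' := by
    rintro p (⟨h1, h2⟩ | ⟨h1, h2⟩)
    · refine Or.inl ⟨?_, ?_⟩
      · show p.1 * σ * p.2⁻¹ = σ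
        conv_lhs => rw [← h1]
        group
      · show p.1 * τ * p.2⁻¹ = τ
        conv_lhs => rw [← h2]
        group
    · refine Or.inr ⟨?_, ?_⟩
      · show p.1 * σ * p.2⁻¹ = τ
        conv_lhs => rw [← h2]
        group
      · show p.1 * τ * p.2⁻¹ = σ
        conv_lhs => rw [← h1]
        group

/-- The action of `δ ∈ Gal(K/k)` on units of `K`. -/
def umap (δ : K ≃ₐ[k] K) : Kˣ →* Kˣ :=
  Units.map δ.toAlgHom.toRingHom.toMonoidHom

variable [PerfectField k] [FiniteDimensional k K]

/-!
A pair `(δ, ε) ∈ S` acts on `Kˣ × Kˣ` by `δ⁻¹` in both coordinates, after swapping them when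
`(δ, ε)` exchanges `σ` and `τ`. Since `δ⁻¹(a σ(b)) = δ⁻¹(a) · (δ⁻¹σε)(ε⁻¹ b)`, this map preserves
`N`; being swapping is multiplicative along `S` (the swaps cancel in pairs) and `δ⁻¹` reverses
products, so the induced maps form a right action of `S` on `A` by automorphisms, that is, a
homomorphism `Sᵒᵖ → Aut A`.
-/

section Twist

variable {k K : Type*} [Field k] [Field K] [Algebra k K]

lemma umap_mul_apply (δ ε : K ≃ₐ[k] K) (u : Kˣ) :
    umap k K (δ * ε) u = umap k K δ (umap k K ε u) :=
  rfl

@[simp]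
lemma coe_umap_apply (δ : K ≃ₐ[k] K) (u : Kˣ) : (umap k K δ u : K) = δ u :=
  rfl

lemma umap_one_apply (u : Kˣ) : umap k K 1 u = u :=
  Units.ext rfl

lemma AlgEquiv.inv_apply_apply_of_inv_mul_mul_eq {δ ε ρ ρ' : K ≃ₐ[k] K}
    (h : δ⁻¹ * ρ * ε = ρ') (x : K) : δ⁻¹ (ρ x) = ρ' (ε⁻¹ x) := by
  rw [← h]
  simp [AlgEquiv.mul_apply]

lemma Prod.fst_inv_mul_mul_snd_mul {G : Type*} [Group G] (ρ : G) (p q : G × G) :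
    (p * q).1⁻¹ * ρ * (p * q).2 = q.1⁻¹ * (p.1⁻¹ * ρ * p.2) * q.2 := by
  simp only [Prod.fst_mul, Prod.snd_mul]
  group

def galoisTwist (σ : K ≃ₐ[k] K) (p : (K ≃ₐ[k] K) × (K ≃ₐ[k] K)) : Kˣ × Kˣ →* Kˣ × Kˣ :=
  open Classical in
  if p.1⁻¹ * σ * p.2 = σ then (umap k K p.1⁻¹).prodMap (umap k K p.1⁻¹)
  else ((umap k K p.1⁻¹).prodMap (umap k K p.1⁻¹)).comp MulEquiv.prodComm.toMonoidHom

lemma galoisTwist_of_eq {σ : K ≃ₐ[k] K} {p : (K ≃ₐ[k] K) × (K ≃ₐ[k] K)} (h : p.1⁻¹ * σ * p.2 = σ)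
    (x : Kˣ × Kˣ) : galoisTwist σ p x = (umap k K p.1⁻¹ x.1, umap k K p.1⁻¹ x.2) := by
  rw [galoisTwist, if_pos h]
  rfl

lemma galoisTwist_of_ne {σ : K ≃ₐ[k] K} {p : (K ≃ₐ[k] K) × (K ≃ₐ[k] K)} (h : p.1⁻¹ * σ * p.2 ≠ σ)
    (x : Kˣ × Kˣ) : galoisTwist σ p x = (umap k K p.1⁻¹ x.2, umap k K p.1⁻¹ x.1) := by
  rw [galoisTwist, if_neg h]
  rfl

variable {σ τ : K ≃ₐ[k] K}

/-- When `σ = τ` the two alternatives in `Sgrp` coincide, so a pair that fails the test in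
`galoisTwist` forces `σ ≠ τ`. -/
lemma galoisTwist_of_mem_Sgrp {p : (K ≃ₐ[k] K) × (K ≃ₐ[k] K)} (hp : p ∈ Sgrp k K σ τ) :
    (p.1⁻¹ * σ * p.2 = σ ∧ p.1⁻¹ * τ * p.2 = τ ∧
        ∀ x, galoisTwist σ p x = (umap k K p.1⁻¹ x.1, umap k K p.1⁻¹ x.2)) ∨
      (p.1⁻¹ * σ * p.2 = τ ∧ p.1⁻¹ * τ * p.2 = σ ∧ σ ≠ τ ∧
        ∀ x, galoisTwist σ p x = (umap k K p.1⁻¹ x.2, umap k K p.1⁻¹ x.1)) := by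
  by_cases hfix : p.1⁻¹ * σ * p.2 = σ
  · refine Or.inl ⟨hfix, ?_, galoisTwist_of_eq hfix⟩
    rcases hp with ⟨-, hτ⟩ | ⟨hστ, hτ⟩
    · exact hτ
    · rw [hτ, ← hστ, hfix]
  · obtain ⟨hσ, hτ⟩ := hp.resolve_left (fun h => hfix h.1)
    exact Or.inr ⟨hσ, hτ, fun h => hfix (hσ.trans h.symm), galoisTwist_of_ne hfix⟩

lemma galoisTwist_mem_NN {p : (K ≃ₐ[k] K) × (K ≃ₐ[k] K)} (hp : p ∈ Sgrp k K σ τ)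
    {x : Kˣ × Kˣ} (hx : x ∈ NN k K σ τ) : galoisTwist σ p x ∈ NN k K σ τ := by
  obtain ⟨a, b, h1, h2⟩ := hx
  refine ⟨umap k K p.1⁻¹ a, umap k K p.2⁻¹ b, ?_⟩
  rcases galoisTwist_of_mem_Sgrp hp with ⟨hσ, hτ, hx⟩ | ⟨hσ, hτ, -, hx⟩ <;>
    simp only [hx, coe_umap_apply, h1, h2, map_mul, AlgEquiv.inv_apply_apply_of_inv_mul_mul_eq hσ,
      AlgEquiv.inv_apply_apply_of_inv_mul_mul_eq hτ, and_self]

lemma galoisTwist_mul {p q : (K ≃ₐ[k] K) × (K ≃ₐ[k] K)} (hp : p ∈ Sgrp k K σ τ)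
    (hq : q ∈ Sgrp k K σ τ) (x : Kˣ × Kˣ) :
    galoisTwist σ (p * q) x = galoisTwist σ q (galoisTwist σ p x) := by
  have hinv (u : Kˣ) : umap k K (p * q).1⁻¹ u = umap k K q.1⁻¹ (umap k K p.1⁻¹ u) := by
    rw [Prod.fst_mul, mul_inv_rev, umap_mul_apply]
  have hpq := Prod.fst_inv_mul_mul_snd_mul σ p q
  rcases galoisTwist_of_mem_Sgrp hp with ⟨hpσ, -, hpx⟩ | ⟨hpσ, -, hστ, hpx⟩ <;>
    rcases galoisTwist_of_mem_Sgrp hq with ⟨hqσ, hqτ, hqx⟩ | ⟨hqσ, hqτ, hστ, hqx⟩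
  · rw [galoisTwist_of_eq (by rw [hpq, hpσ, hqσ]), hpx, hqx, hinv, hinv]
  · rw [galoisTwist_of_ne (by rwa [hpq, hpσ, hqσ, ne_comm]), hpx, hqx, hinv, hinv]
  · rw [galoisTwist_of_ne (by rwa [hpq, hpσ, hqτ, ne_comm]), hpx, hqx, hinv, hinv]
  · rw [galoisTwist_of_eq (by rw [hpq, hpσ, hqτ]), hpx, hqx, hinv, hinv]

lemma galoisTwist_one (x : Kˣ × Kˣ) : galoisTwist σ 1 x = x := by
  rw [galoisTwist_of_eq (by simp)]
  simp [umap_one_apply]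

instance : MulDistribMulAction (Sgrp k K σ τ)ᵐᵒᵖ ((Kˣ × Kˣ) ⧸ NN k K σ τ) where
  smul p := QuotientGroup.map _ _ (galoisTwist σ p.unop) fun _ => galoisTwist_mem_NN p.unop.2
  one_smul a := by
    induction a using QuotientGroup.induction_on with
    | H x => exact congrArg QuotientGroup.mk (galoisTwist_one x)
  mul_smul p q a := by
    induction a using QuotientGroup.induction_on with
    | H x => exact congrArg QuotientGroup.mk (galoisTwist_mul q.unop.2 p.unop.2 x)
  smul_mul p := map_mul _
  smul_one p := map_one _

end Twist

theorem theta_group_hom (σ τ : K ≃ₐ[k] K) (hστ : σ ≠ τ) :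
    ∃ θ : (↥(Sgrp k K σ τ))ᵐᵒᵖ →* MulAut ((Kˣ × Kˣ) ⧸ NN k K σ τ),
      ∀ (p : ↥(Sgrp k K σ τ)) (c d : Kˣ),
        ((p : (K ≃ₐ[k] K) × (K ≃ₐ[k] K)).1⁻¹ * σ * (p : (K ≃ₐ[k] K) × (K ≃ₐ[k] K)).2 = σ →
          θ (MulOpposite.op p) (QuotientGroup.mk (c, d)) =
            QuotientGroup.mk (umap k K (p : (K ≃ₐ[k] K) × (K ≃ₐ[k] K)).1⁻¹ c,
              umap k K (p : (K ≃ₐ[k] K) × (K ≃ₐ[k] K)).1⁻¹ d)) ∧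
        ((p : (K ≃ₐ[k] K) × (K ≃ₐ[k] K)).1⁻¹ * σ * (p : (K ≃ₐ[k] K) × (K ≃ₐ[k] K)).2 = τ →
          θ (MulOpposite.op p) (QuotientGroup.mk (c, d)) =
            QuotientGroup.mk (umap k K (p : (K ≃ₐ[k] K) × (K ≃ₐ[k] K)).1⁻¹ d,
              umap k K (p : (K ≃ₐ[k] K) × (K ≃ₐ[k] K)).1⁻¹ c)) :=
  ⟨MulDistribMulAction.toMulAut _ _, fun _ c d =>
    ⟨fun h => congrArg QuotientGroup.mk (galoisTwist_of_eq h (c, d)),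
      fun h => congrArg QuotientGroup.mk (galoisTwist_of_ne (h.trans_ne hστ.symm) (c, d))⟩⟩
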